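/- arXiv:2503.02370 — 6 statements merged into one kernel-verified Lean document; each statement's English description precedes it below -/
import Mathlib

section
/- Suppose M > L_g‖L_p‖. If x̄, x⁺ ∈ C satisfy s_M(x⁺; x̄) ≤ s_M(x̄; x̄), then f(x⁺) ≤ f(x̄) − ((M − L_g‖L_p‖)/(p+1)!) ‖x⁺ − x̄‖^{p+1}. In particular, along any RHOTA sequence (x_k), the values f(x_k) are nonincreasing and f(x_{k+1}) ≤ f(x_k) − ((M − L_g‖L_p‖)/(p+1)!) ‖x_{k+1} − x_k‖^{p+1} for all k ≥ 0. -/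
open scoped BigOperators RealInnerProductSpace

noncomputable section

/-- The vector `(F_1(x), …, F_m(x)) ∈ ℝ^m` (with the Euclidean norm). -/
def euclMap {n m : ℕ} (F : Fin m → EuclideanSpace ℝ (Fin n) → ℝ)
    (x : EuclideanSpace ℝ (Fin n)) : EuclideanSpace ℝ (Fin m) :=
  (EuclideanSpace.equiv (Fin m) ℝ).symm fun i => F i x

/-- The vector `T_p^F(y; x)` of `p`-th order Taylor approximations of the components
`F_i` around the center `x`, evaluated at `y`. -/
def taylorMap (p : ℕ) {n m : ℕ} (F : Fin m → EuclideanSpace ℝ (Fin n) → ℝ)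
    (y x : EuclideanSpace ℝ (Fin n)) : EuclideanSpace ℝ (Fin m) :=
  (EuclideanSpace.equiv (Fin m) ℝ).symm fun i =>
    ∑ j ∈ Finset.range (p + 1),
      (1 / (Nat.factorial j : ℝ)) * iteratedFDeriv ℝ j (F i) x (fun _ => y - x)

/-- The composite objective `f(x) = g(F(x)) + h(x)`. -/
def fObj {n m : ℕ} (F : Fin m → EuclideanSpace ℝ (Fin n) → ℝ)
    (g : EuclideanSpace ℝ (Fin m) → ℝ) (h : EuclideanSpace ℝ (Fin n) → ℝ)
    (x : EuclideanSpace ℝ (Fin n)) : ℝ :=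
  g (euclMap F x) + h x

/-- The regularized higher-order Taylor model
`s_M(y; x̄) = g(T_p^F(y; x̄)) + (M/(p+1)!)‖y − x̄‖^{p+1} + h(y)`. -/
def sModel (p : ℕ) {n m : ℕ} (F : Fin m → EuclideanSpace ℝ (Fin n) → ℝ)
    (g : EuclideanSpace ℝ (Fin m) → ℝ) (h : EuclideanSpace ℝ (Fin n) → ℝ) (M : ℝ)
    (y xb : EuclideanSpace ℝ (Fin n)) : ℝ :=
  g (taylorMap p F y xb) + M / (Nat.factorial (p + 1) : ℝ) * ‖y - xb‖ ^ (p + 1) + h y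

/-!
Restricted to the segment from `x` to `y`, a function whose `p`-th derivative is `L`-Lipschitz
differs from its `p`-th order Taylor polynomial by at most `L ‖y - x‖^(p+1) / (p+1)!`. Applied
to each `F_i`, this bounds `‖F(y) - T_p^F(y; x)‖` by `‖L_p‖ ‖y - x‖^(p+1) / (p+1)!`, so the
Lipschitz continuity of `g` gives
`f(y) ≤ s_M(y; x) - (M - L_g ‖L_p‖) / (p+1)! * ‖y - x‖^(p+1)`.
Since `s_M(x; x) = f(x)`, any `y` with `s_M(y; x) ≤ s_M(x; x)` satisfies the descent inequality,
whose decrement is nonnegative once `M > L_g ‖L_p‖`.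
-/

open Finset Set

theorem hasDerivAt_pow_succ_div_factorial (j : ℕ) (t : ℝ) :
    HasDerivAt (fun t : ℝ => t ^ (j + 1) / (j + 1).factorial) (t ^ j / j.factorial) t := by
  refine ((hasDerivAt_pow (j + 1) t).div_const ((j + 1).factorial : ℝ)).congr_deriv ?_
  rw [Nat.factorial_succ, Nat.cast_mul]
  field_simp
  push_cast
  ring

theorem hasDerivAt_sum_mul_pow_div_factorial (c : ℕ → ℝ) (p : ℕ) (t : ℝ) :
    HasDerivAt (fun t : ℝ => ∑ j ∈ range (p + 2), c j * t ^ j / j.factorial)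
      (∑ j ∈ range (p + 1), c (j + 1) * t ^ j / j.factorial) t := by
  simp_rw [sum_range_succ' _ (p + 1), pow_zero, mul_div_assoc]
  refine (HasDerivAt.fun_sum fun j _ => ?_).add_const _
  exact (hasDerivAt_pow_succ_div_factorial j t).const_mul (c (j + 1))

theorem abs_sub_sum_taylor_le_of_deriv_chain {φ : ℕ → ℝ → ℝ} {p : ℕ} {K s : ℝ}
    (hφ : ∀ j < p, ∀ t, HasDerivAt (φ j) (φ (j + 1) t) t)
    (hK : ∀ t ∈ Icc 0 s, |φ p t - φ p 0| ≤ K * t) (hs : 0 ≤ s) :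
    |φ 0 s - ∑ j ∈ range (p + 1), φ j 0 * s ^ j / j.factorial|
      ≤ K * s ^ (p + 1) / (p + 1).factorial := by
  -- The remainder of order `p + 1` of `φ 0` has the remainder of order `p` of `φ 1` as its
  -- derivative, so the bound for `p` integrates to the bound for `p + 1`.
  induction p generalizing φ s with
  | zero => simpa using hK s ⟨hs, le_rfl⟩
  | succ p ih =>
    have hderiv : ∀ t, HasDerivAt
        (fun t => φ 0 t - ∑ j ∈ range (p + 2), φ j 0 * t ^ j / j.factorial)
        (φ 1 t - ∑ j ∈ range (p + 1), φ (j + 1) 0 * t ^ j / j.factorial) t := fun t =>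
      (hφ 0 p.succ_pos t).sub (hasDerivAt_sum_mul_pow_div_factorial (φ · 0) p t)
    have hbound : ∀ t ∈ Ico 0 s,
        ‖φ 1 t - ∑ j ∈ range (p + 1), φ (j + 1) 0 * t ^ j / j.factorial‖
          ≤ K * (t ^ (p + 1) / (p + 1).factorial) := fun t ht => by
      rw [Real.norm_eq_abs, ← mul_div_assoc]
      exact ih (fun j hj => hφ (j + 1) (by omega))
        (fun u hu => hK u ⟨hu.1, hu.2.trans ht.2.le⟩) ht.1
    have := image_norm_le_of_norm_deriv_right_le_deriv_boundary
      (fun t _ => (hderiv t).continuousAt.continuousWithinAt)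
      (fun t _ => (hderiv t).hasDerivWithinAt) (by simp [sum_range_succ'])
      (fun t => (hasDerivAt_pow_succ_div_factorial (p + 1) t).const_mul K) hbound
      ⟨hs, le_rfl⟩
    simpa [mul_div_assoc] using this

section Taylor

variable {E F : Type*} [NormedAddCommGroup E] [NormedSpace ℝ E]
  [NormedAddCommGroup F] [NormedSpace ℝ F]

theorem hasDerivAt_iteratedFDeriv_apply_add_smul {f : E → F} {p : ℕ} (hf : ContDiff ℝ p f)
    (x v : E) {j : ℕ} (hj : j < p) (t : ℝ) :
    HasDerivAt (fun t : ℝ => iteratedFDeriv ℝ j f (x + t • v) fun _ => v)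
      (iteratedFDeriv ℝ (j + 1) f (x + t • v) fun _ => v) t := by
  have hline : HasDerivAt (fun t : ℝ => x + t • v) v t := by
    simpa using ((hasDerivAt_id t).smul_const v).const_add x
  have hD : HasDerivAt (fun t : ℝ => iteratedFDeriv ℝ j f (x + t • v))
      (fderiv ℝ (iteratedFDeriv ℝ j f) (x + t • v) v) t :=
    ((hf.differentiable_iteratedFDeriv (mod_cast hj)) _).hasFDerivAt.comp_hasDerivAt t hline
  exact (ContinuousMultilinearMap.apply ℝ (fun _ : Fin j => E) F
    fun _ => v).hasFDerivAt.comp_hasDerivAt t hD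

theorem abs_sub_taylor_le_of_lipschitz_iteratedFDeriv {f : E → ℝ} {p : ℕ} {L : ℝ}
    (hf : ContDiff ℝ p f)
    (hlip : ∀ a b, ‖iteratedFDeriv ℝ p f a - iteratedFDeriv ℝ p f b‖ ≤ L * ‖a - b‖)
    (x y : E) :
    |f y - ∑ j ∈ range (p + 1), 1 / (j.factorial : ℝ) * iteratedFDeriv ℝ j f x fun _ => y - x|
      ≤ L / (p + 1).factorial * ‖y - x‖ ^ (p + 1) := by
  set v := y - x
  have hK : ∀ t ∈ Icc (0 : ℝ) 1,
      |(iteratedFDeriv ℝ p f (x + t • v) fun _ => v) -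
          iteratedFDeriv ℝ p f (x + (0 : ℝ) • v) fun _ => v| ≤ L * ‖v‖ ^ (p + 1) * t := by
    intro t ht
    have hnorm : ‖iteratedFDeriv ℝ p f (x + t • v) - iteratedFDeriv ℝ p f (x + (0 : ℝ) • v)‖
        ≤ L * (t * ‖v‖) := by
      simpa [norm_smul, abs_of_nonneg ht.1] using hlip (x + t • v) (x + (0 : ℝ) • v)
    calc _ ≤ L * (t * ‖v‖) * ∏ _i : Fin p, ‖v‖ := by
          rw [← Real.norm_eq_abs, ← sub_apply]
          exact ContinuousMultilinearMap.le_of_opNorm_le hnorm _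
      _ = L * ‖v‖ ^ (p + 1) * t := by
          rw [prod_const, card_univ, Fintype.card_fin]
          ring
  have := abs_sub_sum_taylor_le_of_deriv_chain
    (φ := fun j t => iteratedFDeriv ℝ j f (x + t • v) fun _ => v)
    (fun j hj t => hasDerivAt_iteratedFDeriv_apply_add_smul hf x v hj t) hK zero_le_one
  have hy : x + v = y := add_sub_cancel x y
  simpa [hy, mul_comm, div_eq_mul_inv, mul_left_comm, mul_assoc] using this

end Taylor

theorem EuclideanSpace.norm_le_norm_of_abs_le {ι : Type*} [Fintype ι] {w z : EuclideanSpace ℝ ι}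
    (h : ∀ i, |w i| ≤ |z i|) : ‖w‖ ≤ ‖z‖ := by
  rw [← sq_le_sq₀ (norm_nonneg w) (norm_nonneg z), EuclideanSpace.real_norm_sq_eq,
    EuclideanSpace.real_norm_sq_eq]
  exact sum_le_sum fun i _ => sq_le_sq.mpr (h i)

theorem nonneg_of_abs_sub_le_mul_norm {E : Type*} [NormedAddCommGroup E] [Nontrivial E]
    {g : E → ℝ} {L : ℝ} (hg : ∀ a b, |g a - g b| ≤ L * ‖a - b‖) : 0 ≤ L := by
  obtain ⟨a, ha⟩ := exists_ne (0 : E)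
  have := (abs_nonneg _).trans (hg a 0)
  rw [sub_zero] at this
  exact nonneg_of_mul_nonneg_left this (norm_pos_iff.mpr ha)

section Model

variable {n m : ℕ} {F : Fin m → EuclideanSpace ℝ (Fin n) → ℝ}

theorem taylorMap_self (p : ℕ) (x : EuclideanSpace ℝ (Fin n)) :
    taylorMap p F x x = euclMap F x := by
  ext i
  have hzero : ∀ k, (iteratedFDeriv ℝ (k + 1) (F i) x fun _ => 0) = 0 := fun k =>
    (iteratedFDeriv ℝ (k + 1) (F i) x).map_coord_zero 0 rfl
  simp [taylorMap, euclMap, sum_range_succ', hzero]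

theorem sModel_self (p : ℕ) (g : EuclideanSpace ℝ (Fin m) → ℝ) (h : EuclideanSpace ℝ (Fin n) → ℝ)
    (M : ℝ) (x : EuclideanSpace ℝ (Fin n)) : sModel p F g h M x x = fObj F g h x := by
  simp [sModel, fObj, taylorMap_self]

theorem norm_euclMap_sub_taylorMap_le {p : ℕ} {Lp : EuclideanSpace ℝ (Fin m)}
    (hFd : ∀ i, ContDiff ℝ p (F i))
    (hFlip : ∀ i (x y : EuclideanSpace ℝ (Fin n)),
      ‖iteratedFDeriv ℝ p (F i) x - iteratedFDeriv ℝ p (F i) y‖ ≤ Lp i * ‖x - y‖)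
    (x y : EuclideanSpace ℝ (Fin n)) :
    ‖euclMap F y - taylorMap p F y x‖ ≤ ‖Lp‖ / (p + 1).factorial * ‖y - x‖ ^ (p + 1) := by
  set c : ℝ := ‖y - x‖ ^ (p + 1) / (p + 1).factorial
  calc ‖euclMap F y - taylorMap p F y x‖ ≤ ‖c • Lp‖ :=
        EuclideanSpace.norm_le_norm_of_abs_le fun i =>
          calc _ ≤ Lp i / (p + 1).factorial * ‖y - x‖ ^ (p + 1) :=
                abs_sub_taylor_le_of_lipschitz_iteratedFDeriv (hFd i) (hFlip i) x y
            _ = (c • Lp) i := by simp only [PiLp.smul_apply, smul_eq_mul, c]; ring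
            _ ≤ |(c • Lp) i| := le_abs_self _
    _ = ‖Lp‖ / (p + 1).factorial * ‖y - x‖ ^ (p + 1) := by
        rw [norm_smul, Real.norm_of_nonneg (by positivity)]
        ring

theorem fObj_le_of_sModel_le {p : ℕ} {Lp : EuclideanSpace ℝ (Fin m)}
    (hFd : ∀ i, ContDiff ℝ p (F i))
    (hFlip : ∀ i (x y : EuclideanSpace ℝ (Fin n)),
      ‖iteratedFDeriv ℝ p (F i) x - iteratedFDeriv ℝ p (F i) y‖ ≤ Lp i * ‖x - y‖)
    {g : EuclideanSpace ℝ (Fin m) → ℝ} {Lg : ℝ} (hLg : 0 ≤ Lg)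
    (hglip : ∀ a b : EuclideanSpace ℝ (Fin m), |g a - g b| ≤ Lg * ‖a - b‖)
    (h : EuclideanSpace ℝ (Fin n) → ℝ) (M : ℝ) {xb xp : EuclideanSpace ℝ (Fin n)}
    (hs : sModel p F g h M xp xb ≤ sModel p F g h M xb xb) :
    fObj F g h xp ≤ fObj F g h xb -
      (M - Lg * ‖Lp‖) / (p + 1).factorial * ‖xp - xb‖ ^ (p + 1) := by
  have hg : g (euclMap F xp) - g (taylorMap p F xp xb)
      ≤ Lg * (‖Lp‖ / (p + 1).factorial * ‖xp - xb‖ ^ (p + 1)) :=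
    (le_abs_self _).trans <| (hglip _ _).trans <|
      mul_le_mul_of_nonneg_left (norm_euclMap_sub_taylorMap_le hFd hFlip xb xp) hLg
  have hsplit : (M - Lg * ‖Lp‖) / (p + 1).factorial * ‖xp - xb‖ ^ (p + 1)
      = M / (p + 1).factorial * ‖xp - xb‖ ^ (p + 1)
        - Lg * (‖Lp‖ / (p + 1).factorial * ‖xp - xb‖ ^ (p + 1)) := by ring
  rw [sModel_self] at hs
  unfold sModel at hs
  unfold fObj at hs ⊢
  linarith

end Model

theorem stmt1_general {n m : ℕ} (hm : 1 ≤ m) (p : ℕ)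
    (F : Fin m → EuclideanSpace ℝ (Fin n) → ℝ)
    (Lp : EuclideanSpace ℝ (Fin m))
    (hFd : ∀ i, ContDiff ℝ p (F i))
    (hFlip : ∀ i (x y : EuclideanSpace ℝ (Fin n)),
      ‖iteratedFDeriv ℝ p (F i) x - iteratedFDeriv ℝ p (F i) y‖ ≤ Lp i * ‖x - y‖)
    (g : EuclideanSpace ℝ (Fin m) → ℝ) (Lg : ℝ)
    (hglip : ∀ a b : EuclideanSpace ℝ (Fin m), |g a - g b| ≤ Lg * ‖a - b‖)
    (C : Set (EuclideanSpace ℝ (Fin n)))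
    (h : EuclideanSpace ℝ (Fin n) → ℝ)
    (M : ℝ) (hM : Lg * ‖Lp‖ < M) :
    (∀ xb xp, xb ∈ C → xp ∈ C →
      sModel p F g h M xp xb ≤ sModel p F g h M xb xb →
      fObj F g h xp ≤ fObj F g h xb -
        (M - Lg * ‖Lp‖) / (Nat.factorial (p + 1) : ℝ) * ‖xp - xb‖ ^ (p + 1)) ∧
    (∀ x : ℕ → EuclideanSpace ℝ (Fin n), (∀ k, x k ∈ C) →
      (∀ k, sModel p F g h M (x (k + 1)) (x k) ≤ sModel p F g h M (x k) (x k)) →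
      (∀ k, fObj F g h (x (k + 1)) ≤ fObj F g h (x k) -
          (M - Lg * ‖Lp‖) / (Nat.factorial (p + 1) : ℝ) * ‖x (k + 1) - x k‖ ^ (p + 1)) ∧
        Antitone fun k => fObj F g h (x k)) := by
  have : Nonempty (Fin m) := ⟨⟨0, hm⟩⟩
  have descent := fun xb xp => fObj_le_of_sModel_le (xb := xb) (xp := xp) hFd hFlip
    (nonneg_of_abs_sub_le_mul_norm hglip) hglip h M
  refine ⟨fun xb xp _ _ => descent xb xp, fun x _ hx => ⟨fun k => descent _ _ (hx k), ?_⟩⟩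
  refine antitone_nat_of_succ_le fun k => (descent _ _ (hx k)).trans (sub_le_self _ ?_)
  have : 0 ≤ M - Lg * ‖Lp‖ := by linarith
  positivity

/-- one-step descent of RHOTA, and monotonicity of `f(x_k)` along
any RHOTA sequence. -/
theorem stmt1 {n m : ℕ} (hn : 1 ≤ n) (hm : 1 ≤ m) (p : ℕ) (hp : 1 ≤ p)
    (F : Fin m → EuclideanSpace ℝ (Fin n) → ℝ)
    (Lp : EuclideanSpace ℝ (Fin m))
    (hFd : ∀ i, ContDiff ℝ p (F i))
    (hFlip : ∀ i (x y : EuclideanSpace ℝ (Fin n)),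
      ‖iteratedFDeriv ℝ p (F i) x - iteratedFDeriv ℝ p (F i) y‖ ≤ Lp i * ‖x - y‖)
    (g : EuclideanSpace ℝ (Fin m) → ℝ) (Lg : ℝ)
    (hgconv : ConvexOn ℝ Set.univ g)
    (hglip : ∀ a b : EuclideanSpace ℝ (Fin m), |g a - g b| ≤ Lg * ‖a - b‖)
    (C : Set (EuclideanSpace ℝ (Fin n))) (hCne : C.Nonempty) (hCcl : IsClosed C)
    (hCcv : Convex ℝ C)
    (h : EuclideanSpace ℝ (Fin n) → ℝ) (hhconv : ConvexOn ℝ Set.univ h)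
    (hhlsc : LowerSemicontinuous h)
    (fstar : ℝ) (hlb : ∀ x ∈ C, fstar ≤ fObj F g h x)
    (M : ℝ) (hM : Lg * ‖Lp‖ < M) :
    (∀ xb xp, xb ∈ C → xp ∈ C →
      sModel p F g h M xp xb ≤ sModel p F g h M xb xb →
      fObj F g h xp ≤ fObj F g h xb -
        (M - Lg * ‖Lp‖) / (Nat.factorial (p + 1) : ℝ) * ‖xp - xb‖ ^ (p + 1)) ∧
    (∀ x : ℕ → EuclideanSpace ℝ (Fin n), (∀ k, x k ∈ C) →
      (∀ k, sModel p F g h M (x (k + 1)) (x k) ≤ sModel p F g h M (x k) (x k)) →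
      (∀ k, fObj F g h (x (k + 1)) ≤ fObj F g h (x k) -
          (M - Lg * ‖Lp‖) / (Nat.factorial (p + 1) : ℝ) * ‖x (k + 1) - x k‖ ^ (p + 1)) ∧
        Antitone fun k => fObj F g h (x k)) :=
  stmt1_general hm p F Lp hFd hFlip g Lg hglip C h M hM

end
end

section
/- The set Ω of cluster points of (x_k) is nonempty, compact and connected; ‖x_{k+1} − x_k‖ → 0 as k → ∞; the sequence (f(x_k)) converges to some f_* ∈ ℝ; and f is constant on Ω with f(x) = f_* for every x ∈ Ω. -/
open Filter Metric Set Topology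

/-- If the steps of a bounded sequence vanish, the set of cluster points is preconnected. -/
lemma cluster_preconnected {E : Type*} [NormedAddCommGroup E] [ProperSpace E]
    (x : ℕ → E) (hxb : Bornology.IsBounded (Set.range x))
    (hstep : Filter.Tendsto (fun k => ‖x (k + 1) - x k‖) Filter.atTop (nhds 0)) :
    IsPreconnected {z | MapClusterPt z Filter.atTop x} := by
  set Ω : Set E := {z | MapClusterPt z Filter.atTop x} with hΩdef
  have hScpt : IsCompact (closure (Set.range x)) := hxb.isCompact_closure
  have hmaple : Filter.map x atTop ≤ 𝓟 (Set.range x) :=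
    le_principal_iff.2 (mem_map.2 (Filter.Eventually.of_forall fun k => mem_range_self k))
  have hΩS : Ω ⊆ closure (Set.range x) := fun z hz =>
    mem_closure_iff_clusterPt.2 (hz.clusterPt.mono hmaple)
  have hΩcl : IsClosed Ω := isClosed_setOf_clusterPt
  have hΩcpt : IsCompact Ω := hScpt.of_isClosed_subset hΩcl hΩS
  intro U V hU hV hUV hUne hVne
  by_contra hcon
  rw [Set.not_nonempty_iff_eq_empty] at hcon
  set A := Ω \ V with hA
  set B := Ω \ U with hB
  have hAcpt : IsCompact A := hΩcpt.diff hV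
  have hBcpt : IsCompact B := hΩcpt.diff hU
  have hAB : A ∪ B = Ω := by
    apply Set.Subset.antisymm (Set.union_subset diff_subset diff_subset)
    intro z hz
    by_cases hzV : z ∈ V
    · refine Or.inr ⟨hz, fun hzU => ?_⟩
      have : z ∈ Ω ∩ (U ∩ V) := ⟨hz, hzU, hzV⟩
      simp [hcon] at this
    · exact Or.inl ⟨hz, hzV⟩
  have hdisj : ∀ z, z ∈ A → z ∈ B → False := by
    intro z hzA hzB
    rcases hUV hzA.1 with h | h
    · exact hzB.2 h
    · exact hzA.2 h
  have hAne : A.Nonempty := by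
    obtain ⟨a, haΩ, haU⟩ := hUne
    refine ⟨a, haΩ, fun haV => ?_⟩
    have : a ∈ Ω ∩ (U ∩ V) := ⟨haΩ, haU, haV⟩
    simp [hcon] at this
  have hBne : B.Nonempty := by
    obtain ⟨b, hbΩ, hbV⟩ := hVne
    refine ⟨b, hbΩ, fun hbU => ?_⟩
    have : b ∈ Ω ∩ (U ∩ V) := ⟨hbΩ, hbU, hbV⟩
    simp [hcon] at this
  -- positive distance between A and B
  obtain ⟨a₀, ha₀A, ha₀min'⟩ := hAcpt.exists_isMinOn hAne (continuous_infDist_pt B).continuousOn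
  have ha₀min : ∀ a ∈ A, infDist a₀ B ≤ infDist a B := fun a ha => ha₀min' ha
  set δ := infDist a₀ B with hδdef
  have hδpos : 0 < δ := by
    rw [hδdef, ← (hBcpt.isClosed.notMem_iff_infDist_pos hBne)]
    exact fun h => hdisj a₀ ha₀A h
  have hABdist : ∀ a ∈ A, ∀ b ∈ B, δ ≤ dist a b := fun a ha b hb =>
    le_trans (ha₀min a ha) (infDist_le_dist_of_mem hb)
  set ε := δ / 3 with hεdef
  have hεpos : 0 < ε := by positivity
  set g : ℕ → ℝ := fun k => infDist (x k) A with hg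
  have hgstep : ∀ k, g (k + 1) ≤ g k + ‖x (k + 1) - x k‖ := by
    intro k
    have := infDist_le_infDist_add_dist (x := x (k + 1)) (y := x k) (s := A)
    rwa [dist_eq_norm] at this
  -- frequently small g
  have hgsmall : ∃ᶠ k in atTop, g k < ε := by
    obtain ⟨a, haA⟩ := hAne
    have hcl : MapClusterPt a atTop x := haA.1
    have := mapClusterPt_iff_frequently.1 hcl (Metric.ball a ε) (Metric.ball_mem_nhds a hεpos)
    exact this.mono fun k hk => lt_of_le_of_lt (infDist_le_dist_of_mem haA) hk
  -- frequently large g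
  have hglarge : ∃ᶠ k in atTop, 2 * ε < g k := by
    obtain ⟨b, hbB⟩ := hBne
    have hcl : MapClusterPt b atTop x := hbB.1
    have hbd : δ ≤ infDist b A := by
      by_contra h
      push_neg at h
      obtain ⟨y, hyA, hy⟩ := (infDist_lt_iff hAne).1 h
      exact absurd (hABdist y hyA b hbB) (by rw [dist_comm] at hy; linarith)
    have := mapClusterPt_iff_frequently.1 hcl (Metric.ball b (ε / 2)) (Metric.ball_mem_nhds b (by positivity))
    refine this.mono fun k hk => ?_
    have h1 : infDist b A ≤ g k + dist b (x k) := infDist_le_infDist_add_dist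
    have h2 : dist b (x k) < ε / 2 := by rw [dist_comm]; exact hk
    have : δ = 3 * ε := by rw [hεdef]; ring
    linarith
  -- frequently intermediate g
  have hmid : ∃ᶠ k in atTop, g k ∈ Set.Icc ε (2 * ε) := by
    rw [frequently_atTop]
    intro N
    obtain ⟨N₁, hN₁⟩ := (Metric.tendsto_atTop.1 hstep) ε hεpos
    have hN₁' : ∀ k ≥ N₁, ‖x (k + 1) - x k‖ < ε := by
      intro k hk
      have := hN₁ k hk
      rwa [Real.dist_eq, sub_zero, abs_of_nonneg (norm_nonneg _)] at this
    obtain ⟨k₁, hk₁ge, hk₁⟩ := frequently_atTop.1 hgsmall (max N N₁)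
    obtain ⟨k₂, hk₂ge, hk₂⟩ := frequently_atTop.1 hglarge (k₁ + 1)
    have hex : ∃ j, ε ≤ g (k₁ + 1 + j) := by
      refine ⟨k₂ - (k₁ + 1), ?_⟩
      rw [Nat.add_sub_cancel' hk₂ge]
      linarith
    obtain ⟨j₀, hj₀spec, hj₀min⟩ : ∃ j, ε ≤ g (k₁ + 1 + j) ∧ ∀ m < j, g (k₁ + 1 + m) < ε :=
      ⟨Nat.find hex, Nat.find_spec hex, fun m hm => not_le.1 (Nat.find_min hex hm)⟩
    refine ⟨k₁ + 1 + j₀, ?_, hj₀spec, ?_⟩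
    · calc N ≤ max N N₁ := le_max_left _ _
        _ ≤ k₁ := hk₁ge
        _ ≤ k₁ + 1 + j₀ := by omega
    · rcases Nat.eq_zero_or_pos j₀ with h0 | hpos
      · rw [h0]
        have := hgstep k₁
        have hs := hN₁' k₁ (le_trans (le_max_right _ _) hk₁ge)
        simpa using by linarith
      · obtain ⟨m, hm⟩ : ∃ m, j₀ = m + 1 := ⟨j₀ - 1, by omega⟩
        have hmlt : g (k₁ + 1 + m) < ε := hj₀min m (by omega)
        have := hgstep (k₁ + 1 + m)
        have hs := hN₁' (k₁ + 1 + m) (by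
          have : N₁ ≤ k₁ := le_trans (le_max_right _ _) hk₁ge
          omega)
        have heq : k₁ + 1 + j₀ = k₁ + 1 + m + 1 := by omega
        rw [heq]
        linarith
  -- extract a cluster point with intermediate infDist to A
  set C := closure (Set.range x) ∩ {z | infDist z A ∈ Set.Icc ε (2 * ε)} with hC
  have hCcl : IsClosed {z : E | infDist z A ∈ Set.Icc ε (2 * ε)} :=
    IsClosed.preimage (continuous_infDist_pt A) isClosed_Icc
  have hCcpt : IsCompact C := hScpt.inter_right hCcl
  have hfreq : ∃ᶠ k in atTop, x k ∈ C :=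
    hmid.mono fun k hk => ⟨subset_closure (mem_range_self k), hk⟩
  have hne : (atTop ⊓ 𝓟 (x ⁻¹' C)).NeBot := frequently_iff_neBot.1 hfreq
  have hle : Filter.map x (atTop ⊓ 𝓟 (x ⁻¹' C)) ≤ 𝓟 C := by
    rw [le_principal_iff, mem_map]
    exact mem_inf_of_right (mem_principal_self _)
  obtain ⟨z, hzC, hz⟩ := hCcpt.exists_clusterPt hle
  have hzΩ : z ∈ Ω := hz.mono (map_mono inf_le_left)
  have hzd : infDist z A ∈ Set.Icc ε (2 * ε) := hzC.2
  rw [← hAB] at hzΩ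
  rcases hzΩ with hzA | hzB
  · have : infDist z A = 0 := infDist_zero_of_mem hzA
    rw [this] at hzd
    exact absurd hzd.1 (by linarith)
  · have hbd : δ ≤ infDist z A := by
      by_contra h
      push_neg at h
      obtain ⟨y, hyA, hy⟩ := (infDist_lt_iff hAne).1 h
      exact absurd (hABdist y hyA z hzB) (by rw [dist_comm] at hy; linarith)
    have : δ = 3 * ε := by rw [hεdef]; ring
    linarith [hzd.2]

/-- for a continuous objective bounded below and a bounded sequence
with sufficient descent, the set `Ω` of cluster points is nonempty, compact and
connected, the steps vanish, `f(x_k)` converges to some `f_*`, and `f ≡ f_*` on `Ω`. -/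
theorem stmt8 {n : ℕ} (hn : 1 ≤ n) (f : EuclideanSpace ℝ (Fin n) → ℝ)
    (hf : Continuous f) (hbdd : BddBelow (Set.range f))
    (p : ℕ) (hp : 1 ≤ p) (c : ℝ) (hc : 0 < c)
    (x : ℕ → EuclideanSpace ℝ (Fin n)) (hxb : Bornology.IsBounded (Set.range x))
    (hdes : ∀ k, f (x (k + 1)) ≤ f (x k) - c * ‖x (k + 1) - x k‖ ^ (p + 1)) :
    ∀ Ω : Set (EuclideanSpace ℝ (Fin n)),
      Ω = {z | MapClusterPt z Filter.atTop x} →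
      Ω.Nonempty ∧ IsCompact Ω ∧ IsConnected Ω ∧
      Filter.Tendsto (fun k => ‖x (k + 1) - x k‖) Filter.atTop (nhds 0) ∧
      ∃ fstar : ℝ, Filter.Tendsto (fun k => f (x k)) Filter.atTop (nhds fstar) ∧
        ∀ z ∈ Ω, f z = fstar := by
  intro Ω hΩ
  -- compactness machinery
  have hScpt : IsCompact (closure (Set.range x)) := hxb.isCompact_closure
  have hmaple : Filter.map x atTop ≤ 𝓟 (Set.range x) :=
    le_principal_iff.2 (mem_map.2 (Filter.Eventually.of_forall fun k => mem_range_self k))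
  -- nonempty
  have hne : Ω.Nonempty := by
    obtain ⟨z, hzS, hz⟩ := hScpt.exists_clusterPt
      (hmaple.trans (principal_mono.2 subset_closure))
    exact ⟨z, by rw [hΩ]; exact hz⟩
  -- compact
  have hΩS : Ω ⊆ closure (Set.range x) := by
    intro z hz
    rw [hΩ] at hz
    exact mem_closure_iff_clusterPt.2 (hz.clusterPt.mono hmaple)
  have hΩcl : IsClosed Ω := by rw [hΩ]; exact isClosed_setOf_clusterPt
  have hΩcpt : IsCompact Ω := hScpt.of_isClosed_subset hΩcl hΩS
  -- convergence of f (x k)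
  have hanti : Antitone fun k => f (x k) := by
    refine antitone_nat_of_succ_le fun k => ?_
    have h1 := hdes k
    have h2 : 0 ≤ c * ‖x (k + 1) - x k‖ ^ (p + 1) :=
      mul_nonneg hc.le (pow_nonneg (norm_nonneg _) _)
    linarith
  have hbdd' : BddBelow (Set.range fun k => f (x k)) := by
    obtain ⟨m, hm⟩ := hbdd
    exact ⟨m, by rintro y ⟨k, rfl⟩; exact hm (mem_range_self (x k))⟩
  have htend : Filter.Tendsto (fun k => f (x k)) atTop (nhds (⨅ k, f (x k))) :=
    tendsto_atTop_ciInf hanti hbdd'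
  set fstar := ⨅ k, f (x k) with hfstar
  -- steps vanish
  have hdiff : Filter.Tendsto (fun k => f (x k) - f (x (k + 1))) atTop (nhds 0) := by
    have := htend.sub (htend.comp (tendsto_add_atTop_nat 1))
    simpa using this
  have hsq : Filter.Tendsto (fun k => ‖x (k + 1) - x k‖ ^ (p + 1)) atTop (nhds 0) := by
    have h0 : Filter.Tendsto (fun k => (f (x k) - f (x (k + 1))) / c) atTop (nhds 0) := by
      simpa using hdiff.div_const c
    refine squeeze_zero (fun k => pow_nonneg (norm_nonneg _) _) (fun k => ?_) h0
    rw [le_div_iff₀ hc, mul_comm]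
    linarith [hdes k]
  have hstep : Filter.Tendsto (fun k => ‖x (k + 1) - x k‖) atTop (nhds 0) := by
    rw [Metric.tendsto_atTop]
    intro ε hε
    obtain ⟨N, hN⟩ := (Metric.tendsto_atTop.1 hsq) (ε ^ (p + 1)) (pow_pos hε _)
    refine ⟨N, fun k hk => ?_⟩
    have := hN k hk
    rw [Real.dist_eq, sub_zero, abs_of_nonneg (pow_nonneg (norm_nonneg _) _)] at this
    rw [Real.dist_eq, sub_zero, abs_of_nonneg (norm_nonneg _)]
    exact lt_of_pow_lt_pow_left₀ _ hε.le this
  -- connected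
  have hconn : IsConnected Ω := by
    refine ⟨hne, ?_⟩
    rw [hΩ]
    exact cluster_preconnected x hxb hstep
  refine ⟨hne, hΩcpt, hconn, hstep, fstar, htend, fun z hz => ?_⟩
  rw [hΩ] at hz
  have hfz : MapClusterPt (f z) atTop (f ∘ x) := hz.continuousAt_comp hf.continuousAt
  have hcl : ClusterPt (f z) (nhds fstar) :=
    (hfz.clusterPt).mono (htend : Filter.Tendsto (f ∘ x) atTop (nhds fstar))
  exact eq_of_nhds_neBot hcl
end

section
/- Let (Δ_k)_{k≥0} be a nonincreasing sequence of nonnegative real numbers and C₁, C₂ > 0, θ > 0 constants such that Δ_{k+1} ≤ C₁(Δ_k − Δ_{k+1})^{θ} + C₂(Δ_k − Δ_{k+1}) for all k ≥ 0. If θ ≥ 1, then Δ_k converges to 0 linearly: there exist c > 0, ρ ∈ (0,1) and K such that Δ_k ≤ c ρ^k for all k ≥ K. If 0 < θ < 1, then Δ_k converges to 0 sublinearly with rate O(k^{−θ/(1−θ)}): there exists c > 0 such that Δ_k ≤ c k^{−θ/(1−θ)} for all k ≥ 1. -/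
/-!
The decrements `e_k = Δ_k - Δ_{k+1}` tend to `0` because `Δ` converges, so eventually `e_k ≤ 1`
and the recurrence becomes `Δ_{k+1} ≤ C e_k` when `θ ≥ 1` and `Δ_{k+1} ≤ C e_k ^ θ` when `θ < 1`,
with `C = C₁ + C₂`. In the first case `Δ_{k+1} ≤ C / (1 + C) · Δ_k`. In the second case
`f (Δ_{k+1}) ≤ Δ_k` for the increasing map `f t = t + D t ^ (1/θ)`, so `Δ` stays below every
sequence `s` with `s_k ≤ f (s_{k+1})` that starts above it; by the tangent-line bound for the
convex function `x ↦ x ^ (-α)`, `α = θ / (1 - θ)`, the sequence `s_k = c k ^ (-α)` is one as soon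
as `c` is large.
-/

open Filter Topology

lemma tendsto_sub_succ_of_antitone {u : ℕ → ℝ} (hu : Antitone u) (hbdd : BddBelow (Set.range u)) :
    Tendsto (fun k => u k - u (k + 1)) atTop (𝓝 0) := by
  have h := tendsto_atTop_ciInf hu hbdd
  simpa using h.sub (h.comp (tendsto_add_atTop_nat 1))

lemma le_of_strictMonoOn_of_map_succ_le {α : Type*} [LinearOrder α] {f : α → α} {S : Set α}
    (hf : StrictMonoOn f S) {u s : ℕ → α} (hu : ∀ k, u k ∈ S) (hs : ∀ k, s k ∈ S) {K : ℕ}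
    (hu_rec : ∀ k ≥ K, f (u (k + 1)) ≤ u k) (hs_rec : ∀ k ≥ K, s k ≤ f (s (k + 1)))
    (hK : u K ≤ s K) : ∀ k ≥ K, u k ≤ s k := by
  intro k hk
  induction k, hk using Nat.le_induction with
  | base => exact hK
  | succ k hk ih =>
    exact (hf.le_iff_le (hu _) (hs _)).1 ((hu_rec k hk).trans (ih.trans (hs_rec k hk)))

lemma exists_geometric_bound_of_le_mul_sub {u : ℕ → ℝ} (hu : ∀ k, 0 ≤ u k) {C : ℝ} (hC : 0 < C)
    {K : ℕ} (h : ∀ k ≥ K, u (k + 1) ≤ C * (u k - u (k + 1))) :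
    ∃ c > (0 : ℝ), ∃ ρ ∈ Set.Ioo (0 : ℝ) 1, ∀ k ≥ K, u k ≤ c * ρ ^ k := by
  set ρ := C / (1 + C)
  have hρ : 0 < ρ := by positivity
  have hρ1 : ρ < 1 := (div_lt_one (by positivity)).2 (by linarith)
  have hcK : 0 < (u K + 1) / ρ ^ K := by have := hu K; positivity
  refine ⟨_, hcK, ρ, ⟨hρ, hρ1⟩, le_of_strictMonoOn_of_map_succ_le
    ((strictMono_mul_left_of_pos (inv_pos.2 hρ)).strictMonoOn Set.univ) (fun _ => Set.mem_univ _)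
    (fun _ => Set.mem_univ _) (fun k hk => ?_) (fun k _ => ?_) ?_⟩
  · rw [inv_mul_le_iff₀ hρ, div_mul_eq_mul_div, le_div_iff₀ (by positivity)]
    linarith [h k hk]
  · rw [pow_succ]; field_simp; rfl
  · rw [div_mul_cancel₀ _ (by positivity)]; linarith

lemma rpow_neg_sub_rpow_neg_le {a b α : ℝ} (ha : 0 < a) (hb : 0 < b) (hα : 0 ≤ α) :
    a ^ (-α) - b ^ (-α) ≤ α * (b - a) * a ^ (-α - 1) := by
  have hbern : 1 - α * (b / a - 1) ≤ (b / a) ^ (-α) := by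
    rw [Real.rpow_def_of_pos (div_pos hb ha)]
    have hlog := Real.log_le_sub_one_of_pos (div_pos hb ha)
    nlinarith [Real.add_one_le_exp (Real.log (b / a) * -α)]
  have hsplit : b ^ (-α) = a ^ (-α) * (b / a) ^ (-α) := by
    rw [← Real.mul_rpow ha.le (div_pos hb ha).le, mul_div_cancel₀ _ ha.ne']
  rw [hsplit, Real.rpow_sub_one ha.ne']
  have hpos : 0 < a ^ (-α) := Real.rpow_pos_of_pos ha _
  have hscaled := mul_le_mul_of_nonneg_left hbern hpos.le
  calc a ^ (-α) - a ^ (-α) * (b / a) ^ (-α) ≤ a ^ (-α) * (α * (b / a - 1)) := by nlinarith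
    _ = α * (b - a) * (a ^ (-α) / a) := by field_simp

lemma mul_rpow_neg_le_add {α D c x : ℝ} (hα : 0 < α) (hc : 0 ≤ c) (hx : 1 ≤ x)
    (hcD : α * 2 ^ (α + 1) ≤ D * c ^ α⁻¹) :
    c * x ^ (-α) ≤ c * (x + 1) ^ (-α) + D * (c * (x + 1) ^ (-α)) ^ (1 + α⁻¹) := by
  have hx0 : 0 < x := by linarith
  have hdiff := rpow_neg_sub_rpow_neg_le hx0 (by linarith : 0 < x + 1) hα.le
  have hshift : x ^ (-α - 1) ≤ 2 ^ (α + 1) * (x + 1) ^ (-α - 1) := by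
    have h2x : (2 * x) ^ (-α - 1) ≤ (x + 1) ^ (-α - 1) :=
      Real.rpow_le_rpow_of_nonpos (by linarith) (by linarith) (by linarith)
    rw [Real.mul_rpow zero_le_two hx0.le, show -α - 1 = -(α + 1) by ring,
      Real.rpow_neg zero_le_two] at h2x
    rw [← inv_mul_le_iff₀ (by positivity)]
    simpa only [show -α - 1 = -(α + 1) by ring] using h2x
  have hpow : (c * (x + 1) ^ (-α)) ^ (1 + α⁻¹) = c * c ^ α⁻¹ * (x + 1) ^ (-α - 1) := by
    rw [Real.mul_rpow hc (by positivity), ← Real.rpow_mul (by positivity),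
      Real.rpow_add' hc (by positivity), Real.rpow_one]
    congr 2
    field_simp
    ring
  rw [hpow]
  calc c * x ^ (-α) ≤ c * (x + 1) ^ (-α) + c * (α * 2 ^ (α + 1) * (x + 1) ^ (-α - 1)) := by
        nlinarith [mul_le_mul_of_nonneg_left hshift (mul_nonneg hc hα.le)]
    _ ≤ c * (x + 1) ^ (-α) + c * (D * c ^ α⁻¹ * (x + 1) ^ (-α - 1)) := by gcongr
    _ = _ := by ring

lemma exists_rpow_bound_of_add_mul_rpow_le {u : ℕ → ℝ} (hu : ∀ k, 0 ≤ u k) (hanti : Antitone u)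
    {α D : ℝ} (hα : 0 < α) (hD : 0 < D) {K : ℕ}
    (h : ∀ k ≥ K, u (k + 1) + D * u (k + 1) ^ (1 + α⁻¹) ≤ u k) :
    ∃ c > (0 : ℝ), ∀ k : ℕ, 1 ≤ k → u k ≤ c * (k : ℝ) ^ (-α) := by
  obtain ⟨c, hcD, hc0, hc1⟩ : ∃ c : ℝ, α * 2 ^ (α + 1) ≤ D * c ^ α⁻¹ ∧
      u 0 * ((K : ℝ) + 1) ^ α ≤ c ∧ 1 ≤ c :=
    (((tendsto_rpow_atTop (inv_pos.2 hα)).const_mul_atTop hD).eventually_ge_atTop _ |>.and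
      ((eventually_ge_atTop _).and (eventually_ge_atTop _))).exists
  have hc : 0 < c := by linarith
  have hinit : ∀ k : ℕ, 1 ≤ k → k ≤ K + 1 → u k ≤ c * (k : ℝ) ^ (-α) := by
    intro k hk1 hkK
    have hk : (1 : ℝ) ≤ k := by exact_mod_cast hk1
    have hkK' : (k : ℝ) ≤ K + 1 := by exact_mod_cast hkK
    calc u k ≤ u 0 := hanti (Nat.zero_le k)
      _ ≤ c * ((K : ℝ) + 1) ^ (-α) := by
        rw [Real.rpow_neg (by positivity), ← div_eq_mul_inv, le_div_iff₀ (by positivity)]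
        exact hc0
      _ ≤ c * (k : ℝ) ^ (-α) := mul_le_mul_of_nonneg_left
        (Real.rpow_le_rpow_of_nonpos (by linarith) hkK' (by linarith)) hc.le
  have hmono : StrictMonoOn (fun t : ℝ => t + D * t ^ (1 + α⁻¹)) (Set.Ici 0) :=
    strictMonoOn_id.add_monotone fun x (hx : 0 ≤ x) y _ hxy => by gcongr
  have hcomp := le_of_strictMonoOn_of_map_succ_le hmono (u := u) (s := fun k => c * (k : ℝ) ^ (-α))
    hu (fun k => Set.mem_Ici.2 (by positivity)) (K := K + 1) (fun k hk => h k (by omega))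
    (fun k hk => by
      have hk1 : (1 : ℝ) ≤ k := by exact_mod_cast (by omega : 1 ≤ k)
      simpa using mul_rpow_neg_le_add hα hc.le hk1 hcD)
    (hinit _ (by omega) le_rfl)
  refine ⟨c, hc, fun k hk => ?_⟩
  rcases le_total k (K + 1) with hkK | hkK
  · exact hinit k hk hkK
  · exact hcomp k hkK

lemma add_mul_rpow_inv_le_of_le_mul_rpow {x y C θ : ℝ} (hx : 0 ≤ x) (hxy : x ≤ y) (hC : 0 < C)
    (hθ : 0 < θ) (h : x ≤ C * (y - x) ^ θ) : x + (C ^ θ⁻¹)⁻¹ * x ^ θ⁻¹ ≤ y := by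
  have hyx : 0 ≤ y - x := sub_nonneg.2 hxy
  have hpow : x ^ θ⁻¹ ≤ C ^ θ⁻¹ * (y - x) :=
    calc x ^ θ⁻¹ ≤ (C * (y - x) ^ θ) ^ θ⁻¹ := Real.rpow_le_rpow hx h (by positivity)
      _ = C ^ θ⁻¹ * (y - x) := by
        rw [Real.mul_rpow hC.le (by positivity), Real.rpow_rpow_inv hyx hθ.ne']
  rw [← le_sub_iff_add_le', inv_mul_le_iff₀ (by positivity)]
  exact hpow

lemma exists_rpow_bound_of_le_mul_sub_rpow {u : ℕ → ℝ} (hu : ∀ k, 0 ≤ u k) (hanti : Antitone u)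
    {C θ : ℝ} (hC : 0 < C) (hθ : 0 < θ) (hθ1 : θ < 1) {K : ℕ}
    (h : ∀ k ≥ K, u (k + 1) ≤ C * (u k - u (k + 1)) ^ θ) :
    ∃ c > (0 : ℝ), ∀ k : ℕ, 1 ≤ k → u k ≤ c * (k : ℝ) ^ (-θ / (1 - θ)) := by
  have hα : 0 < θ / (1 - θ) := div_pos hθ (by linarith)
  have hexp : 1 + (θ / (1 - θ))⁻¹ = θ⁻¹ := by
    field_simp [(by linarith : 1 - θ ≠ 0)]
    ring
  rw [neg_div]
  refine exists_rpow_bound_of_add_mul_rpow_le hu hanti hα (by positivity : 0 < (C ^ θ⁻¹)⁻¹)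
    (K := K) fun k hk => ?_
  rw [hexp]
  exact add_mul_rpow_inv_le_of_le_mul_rpow (hu _) (hanti k.le_succ) hC hθ (h k hk)

/-- linear/sublinear decay of a nonincreasing nonnegative sequence
satisfying the KL-type recurrence `Δ_{k+1} ≤ C₁(Δ_k − Δ_{k+1})^θ + C₂(Δ_k − Δ_{k+1})`. -/
theorem stmt10 (Δ : ℕ → ℝ) (hnn : ∀ k, 0 ≤ Δ k) (hanti : ∀ k, Δ (k + 1) ≤ Δ k)
    (C₁ C₂ θ : ℝ) (hC₁ : 0 < C₁) (hC₂ : 0 < C₂) (hθ : 0 < θ)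
    (hrec : ∀ k, Δ (k + 1) ≤ C₁ * (Δ k - Δ (k + 1)) ^ θ + C₂ * (Δ k - Δ (k + 1))) :
    (1 ≤ θ → ∃ c > (0 : ℝ), ∃ ρ ∈ Set.Ioo (0 : ℝ) 1, ∃ K : ℕ,
      ∀ k ≥ K, Δ k ≤ c * ρ ^ k) ∧
    (θ < 1 → ∃ c > (0 : ℝ), ∀ k : ℕ, 1 ≤ k →
      Δ k ≤ c * (k : ℝ) ^ (-θ / (1 - θ))) := by
  have hΔ : Antitone Δ := antitone_nat_of_succ_le hanti
  have hdiff : ∀ k, 0 ≤ Δ k - Δ (k + 1) := fun k => sub_nonneg.2 (hanti k)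
  obtain ⟨K, hK⟩ : ∃ K, ∀ k ≥ K, Δ k - Δ (k + 1) ≤ 1 := eventually_atTop.1 <|
    (tendsto_sub_succ_of_antitone hΔ ⟨0, Set.forall_mem_range.2 hnn⟩).eventually
      (ge_mem_nhds one_pos)
  refine ⟨fun hθ1 => ?_, fun hθ1 => ?_⟩
  · obtain ⟨c, hc, ρ, hρ, hbound⟩ := exists_geometric_bound_of_le_mul_sub hnn (add_pos hC₁ hC₂)
      (K := K) fun k hk => by
        calc Δ (k + 1) ≤ C₁ * (Δ k - Δ (k + 1)) ^ θ + C₂ * (Δ k - Δ (k + 1)) := hrec k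
          _ ≤ C₁ * (Δ k - Δ (k + 1)) + C₂ * (Δ k - Δ (k + 1)) := by
            gcongr; exact Real.rpow_le_self_of_le_one (hdiff k) (hK k hk) hθ1
          _ = (C₁ + C₂) * (Δ k - Δ (k + 1)) := by ring
    exact ⟨c, hc, ρ, hρ, K, hbound⟩
  · refine exists_rpow_bound_of_le_mul_sub_rpow hnn hΔ (add_pos hC₁ hC₂) hθ hθ1 (K := K)
      fun k hk => ?_
    calc Δ (k + 1) ≤ C₁ * (Δ k - Δ (k + 1)) ^ θ + C₂ * (Δ k - Δ (k + 1)) := hrec k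
      _ ≤ C₁ * (Δ k - Δ (k + 1)) ^ θ + C₂ * (Δ k - Δ (k + 1)) ^ θ := by
        gcongr; exact Real.self_le_rpow_of_le_one (hdiff k) (hK k hk) hθ1.le
      _ = (C₁ + C₂) * (Δ k - Δ (k + 1)) ^ θ := by ring
end

section
/- For every x ∈ ℝ^n and every (u, w) ∈ F one has θ(x, u) ≥ β(u, w). Consequently, inf_{x ∈ ℝ^n} sup_{‖u‖ ≤ 1} θ(x, u) ≥ sup_{(u,w) ∈ F} β(u, w) (weak duality for the p = 2 regularized Taylor subproblem). -/
open scoped BigOperators RealInnerProductSpace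

noncomputable section

variable {n m : ℕ}

/-- `H(u, w) = Σ_i u_i A_i + B + (w/2) I_n`. -/
def Hmat (A : Fin m → Matrix (Fin n) (Fin n) ℝ) (B : Matrix (Fin n) (Fin n) ℝ)
    (u : EuclideanSpace ℝ (Fin m)) (w : ℝ) : Matrix (Fin n) (Fin n) ℝ :=
  ∑ i, u i • A i + B + (w / 2) • (1 : Matrix (Fin n) (Fin n) ℝ)

/-- `G(u) = Σ_i u_i b_i + a + B x̄`. -/
def Gvec (B : Matrix (Fin n) (Fin n) ℝ) (b : Fin m → EuclideanSpace ℝ (Fin n))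
    (a xb : EuclideanSpace ℝ (Fin n)) (u : EuclideanSpace ℝ (Fin m)) :
    EuclideanSpace ℝ (Fin n) :=
  ∑ i, u i • b i + a + Matrix.toEuclideanCLM (𝕜 := ℝ) B xb

/-- `l(u) = Σ_i u_i c_i`. -/
def lfun (c : Fin m → ℝ) (u : EuclideanSpace ℝ (Fin m)) : ℝ :=
  ∑ i, u i * c i

/-- The primal function
`θ(x, u) = l(u) + ⟨G(u), x − x̄⟩ + (1/2)⟨(Σ u_i A_i + B)(x − x̄), x − x̄⟩ + (M/6)‖x − x̄‖³`. -/
def θfun (A : Fin m → Matrix (Fin n) (Fin n) ℝ) (B : Matrix (Fin n) (Fin n) ℝ)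
    (b : Fin m → EuclideanSpace ℝ (Fin n)) (a : EuclideanSpace ℝ (Fin n))
    (c : Fin m → ℝ) (xb : EuclideanSpace ℝ (Fin n)) (M : ℝ)
    (x : EuclideanSpace ℝ (Fin n)) (u : EuclideanSpace ℝ (Fin m)) : ℝ :=
  lfun c u + ⟪Gvec B b a xb u, x - xb⟫ +
    (1 / 2) * ⟪Matrix.toEuclideanCLM (𝕜 := ℝ) (∑ i, u i • A i + B) (x - xb), x - xb⟫ +
    M / 6 * ‖x - xb‖ ^ 3

/-- The dual function
`β(u, w) = l(u) − (1/2)⟨H(u,w)⁻¹ G(u), G(u)⟩ − w³/(12M²)`. -/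
def βfun (A : Fin m → Matrix (Fin n) (Fin n) ℝ) (B : Matrix (Fin n) (Fin n) ℝ)
    (b : Fin m → EuclideanSpace ℝ (Fin n)) (a : EuclideanSpace ℝ (Fin n))
    (c : Fin m → ℝ) (xb : EuclideanSpace ℝ (Fin n)) (M : ℝ)
    (u : EuclideanSpace ℝ (Fin m)) (w : ℝ) : ℝ :=
  lfun c u -
    (1 / 2) * ⟪Matrix.toEuclideanCLM (𝕜 := ℝ) (Hmat A B u w)⁻¹ (Gvec B b a xb u),
      Gvec B b a xb u⟫ -
    w ^ 3 / (12 * M ^ 2)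

/-- The dual feasible set `F = {(u, w) : ‖u‖ ≤ 1, w ≥ 0, H(u, w) ≻ 0}`. -/
def Feas (A : Fin m → Matrix (Fin n) (Fin n) ℝ) (B : Matrix (Fin n) (Fin n) ℝ) :
    Set (EuclideanSpace ℝ (Fin m) × ℝ) :=
  {uw | ‖uw.1‖ ≤ 1 ∧ 0 ≤ uw.2 ∧ (Hmat A B uw.1 uw.2).PosDef}

/-!
Write `s = x - x̄` and `H = H(u, w)`. The quadratic part of `θ(x, u)` is
`½⟨Hs, s⟩ - (w/4)‖s‖²`, so completing the square gives
`θ(x, u) - β(u, w) = ½⟨H(s + H⁻¹G), s + H⁻¹G⟩ + (M/6)‖s‖³ - (w/4)‖s‖² + w³/(12M²)`.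
The first term is nonnegative because `H ≻ 0`, and the cubic remainder equals
`(M‖s‖ - w)²(2M‖s‖ + w)/(12M²) ≥ 0`. For the inf-sup inequality (where `sSup ∅ = 0` in `ℝ`)
one needs `F ≠ ∅`, witnessed by `(0, w)` with `w/2 > ‖B‖`, and that `θ(x, ·)`, being continuous,
is bounded on the unit ball.
-/

namespace Matrix

variable {ι : Type*} [Fintype ι] [DecidableEq ι]

lemma IsHermitian.inner_toEuclideanCLM_comm {H : Matrix ι ι ℝ} (hH : H.IsHermitian)
    (x y : EuclideanSpace ℝ ι) :
    ⟪toEuclideanCLM (𝕜 := ℝ) H x, y⟫ = ⟪x, toEuclideanCLM (𝕜 := ℝ) H y⟫ :=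
  isSymmetric_toEuclideanLin_iff.mpr hH x y

lemma PosSemidef.inner_toEuclideanCLM_self_nonneg {H : Matrix ι ι ℝ} (hH : H.PosSemidef)
    (x : EuclideanSpace ℝ ι) : 0 ≤ ⟪toEuclideanCLM (𝕜 := ℝ) H x, x⟫ := by
  rw [real_inner_comm, inner_toEuclideanCLM]
  simpa using hH.dotProduct_mulVec_nonneg x.ofLp

lemma toEuclideanCLM_mul_inv_apply {H : Matrix ι ι ℝ} (hH : IsUnit H.det)
    (x : EuclideanSpace ℝ ι) :
    toEuclideanCLM (𝕜 := ℝ) H (toEuclideanCLM (𝕜 := ℝ) H⁻¹ x) = x := by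
  calc toEuclideanCLM (𝕜 := ℝ) H (toEuclideanCLM (𝕜 := ℝ) H⁻¹ x)
      = toEuclideanCLM (𝕜 := ℝ) (H * H⁻¹) x := by rw [map_mul]; rfl
    _ = x := by rw [mul_nonsing_inv _ hH, map_one]; rfl

lemma inner_toEuclideanCLM_add_smul_one_self (P : Matrix ι ι ℝ) (c : ℝ)
    (x : EuclideanSpace ℝ ι) :
    ⟪toEuclideanCLM (𝕜 := ℝ) (P + c • 1) x, x⟫ =
      ⟪toEuclideanCLM (𝕜 := ℝ) P x, x⟫ + c * ‖x‖ ^ 2 := by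
  simp [inner_add_left, real_inner_smul_left]

lemma PosDef.neg_inner_inv_le {H : Matrix ι ι ℝ} (hH : H.PosDef) (g s : EuclideanSpace ℝ ι) :
    -⟪toEuclideanCLM (𝕜 := ℝ) H⁻¹ g, g⟫ ≤ ⟪toEuclideanCLM (𝕜 := ℝ) H s, s⟫ + 2 * ⟪g, s⟫ := by
  set T := toEuclideanCLM (𝕜 := ℝ) H
  set v := toEuclideanCLM (𝕜 := ℝ) H⁻¹ g
  have hTv : T v = g := toEuclideanCLM_mul_inv_apply (isUnit_iff_ne_zero.mpr hH.det_pos.ne') g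
  have hsq : ⟪T (s + v), s + v⟫ = ⟪T s, s⟫ + 2 * ⟪g, s⟫ + ⟪v, g⟫ := by
    rw [map_add, hTv, inner_add_left, inner_add_right, inner_add_right,
      hH.isHermitian.inner_toEuclideanCLM_comm s v, hTv, real_inner_comm s g, real_inner_comm v g]
    ring
  linarith [hH.posSemidef.inner_toEuclideanCLM_self_nonneg (s + v)]

lemma IsHermitian.posDef_add_smul_one {B : Matrix ι ι ℝ} (hB : B.IsHermitian) {c : ℝ}
    (hc : ‖toEuclideanCLM (𝕜 := ℝ) B‖ < c) : (B + c • 1).PosDef := by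
  refine .of_dotProduct_mulVec_pos (hB.add (isHermitian_one.smul (.all c))) fun x hx => ?_
  set y : EuclideanSpace ℝ ι := WithLp.toLp 2 x
  have hy : 0 < ‖y‖ := norm_pos_iff.mpr (by simpa [y] using hx)
  have hCS : -(‖toEuclideanCLM (𝕜 := ℝ) B‖ * ‖y‖ ^ 2) ≤ ⟪toEuclideanCLM (𝕜 := ℝ) B y, y⟫ := by
    refine neg_le_of_abs_le ((abs_real_inner_le_norm _ _).trans ?_)
    rw [sq, ← mul_assoc]
    gcongr
    exact (toEuclideanCLM (𝕜 := ℝ) B).le_opNorm y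
  have hquad : star x ⬝ᵥ (B + c • 1) *ᵥ x = ⟪toEuclideanCLM (𝕜 := ℝ) (B + c • 1) y, y⟫ := by
    rw [real_inner_comm, inner_toEuclideanCLM]; rfl
  rw [hquad, inner_toEuclideanCLM_add_smul_one_self]
  nlinarith [mul_pos (sub_pos.mpr hc) (pow_pos hy 2)]

end Matrix

lemma mul_sq_div_four_le_cube_add {M w r : ℝ} (hM : 0 < M) (hw : 0 ≤ w) (hr : 0 ≤ r) :
    w * r ^ 2 / 4 ≤ M * r ^ 3 / 6 + w ^ 3 / (12 * M ^ 2) := by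
  have key : M * r ^ 3 / 6 + w ^ 3 / (12 * M ^ 2) - w * r ^ 2 / 4
      = (M * r - w) ^ 2 * (2 * M * r + w) / (12 * M ^ 2) := by
    field_simp; ring
  have : 0 ≤ (M * r - w) ^ 2 * (2 * M * r + w) / (12 * M ^ 2) := by positivity
  linarith

section Duality

variable (A : Fin m → Matrix (Fin n) (Fin n) ℝ) (B : Matrix (Fin n) (Fin n) ℝ)
  (b : Fin m → EuclideanSpace ℝ (Fin n)) (a : EuclideanSpace ℝ (Fin n))
  (c : Fin m → ℝ) (xb : EuclideanSpace ℝ (Fin n)) (M : ℝ)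

lemma continuous_θfun (x : EuclideanSpace ℝ (Fin n)) :
    Continuous (θfun A B b a c xb M x) := by
  unfold θfun lfun Gvec
  simp only [map_add, map_sum, map_smul]
  fun_prop

lemma bddAbove_θfun_closedBall (x : EuclideanSpace ℝ (Fin n)) :
    BddAbove {t : ℝ | ∃ u : EuclideanSpace ℝ (Fin m), ‖u‖ ≤ 1 ∧ t = θfun A B b a c xb M x u} := by
  have himage : {t : ℝ | ∃ u : EuclideanSpace ℝ (Fin m), ‖u‖ ≤ 1 ∧ t = θfun A B b a c xb M x u}
      = θfun A B b a c xb M x '' Metric.closedBall 0 1 := by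
    ext t
    simp [eq_comm]
  rw [himage]
  exact ((isCompact_closedBall _ _).image (continuous_θfun A B b a c xb M x)).bddAbove

lemma Feas_nonempty (hB : B.IsSymm) : (Feas A B).Nonempty := by
  set w := 2 * (‖Matrix.toEuclideanCLM (𝕜 := ℝ) B‖ + 1)
  have hH : Hmat A B 0 w = B + (‖Matrix.toEuclideanCLM (𝕜 := ℝ) B‖ + 1) • 1 := by
    simp [Hmat, w]
  refine ⟨(0, w), by simp, by positivity, ?_⟩
  rw [hH]
  exact Matrix.IsHermitian.posDef_add_smul_one hB (lt_add_one _)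

variable {A B b a c xb M}

lemma βfun_le_θfun (hM : 0 < M) {u : EuclideanSpace ℝ (Fin m)} {w : ℝ} (huw : (u, w) ∈ Feas A B)
    (x : EuclideanSpace ℝ (Fin n)) : βfun A B b a c xb M u w ≤ θfun A B b a c xb M x u := by
  obtain ⟨-, hw, hH⟩ := huw
  have hsplit := Matrix.inner_toEuclideanCLM_add_smul_one_self (∑ i, u i • A i + B) (w / 2) (x - xb)
  have hsq := hH.neg_inner_inv_le (Gvec B b a xb u) (x - xb)
  have hcubic := mul_sq_div_four_le_cube_add hM hw (norm_nonneg (x - xb))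
  unfold βfun θfun Hmat at *
  linarith

end Duality

theorem stmt12_general {n m : ℕ}
    (A : Fin m → Matrix (Fin n) (Fin n) ℝ) (B : Matrix (Fin n) (Fin n) ℝ)
    (hB : B.IsSymm)
    (b : Fin m → EuclideanSpace ℝ (Fin n)) (a : EuclideanSpace ℝ (Fin n))
    (c : Fin m → ℝ) (xb : EuclideanSpace ℝ (Fin n)) (M : ℝ) (hM : 0 < M) :
    (∀ (x : EuclideanSpace ℝ (Fin n)) (u : EuclideanSpace ℝ (Fin m)) (w : ℝ),
      (u, w) ∈ Feas A B → βfun A B b a c xb M u w ≤ θfun A B b a c xb M x u) ∧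
    sSup {t : ℝ | ∃ u w, (u, w) ∈ Feas A B ∧ t = βfun A B b a c xb M u w} ≤
      sInf {v : ℝ | ∃ x : EuclideanSpace ℝ (Fin n),
        v = sSup {t : ℝ | ∃ u : EuclideanSpace ℝ (Fin m),
          ‖u‖ ≤ 1 ∧ t = θfun A B b a c xb M x u}} := by
  refine ⟨fun x u w huw => βfun_le_θfun hM huw x, ?_⟩
  obtain ⟨⟨u₀, w₀⟩, h₀⟩ := Feas_nonempty A B hB
  refine le_csInf ⟨_, 0, rfl⟩ ?_
  rintro _ ⟨x, rfl⟩
  refine csSup_le ⟨_, u₀, w₀, h₀, rfl⟩ ?_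
  rintro _ ⟨u, w, huw, rfl⟩
  exact (βfun_le_θfun hM huw x).trans
    (le_csSup (bddAbove_θfun_closedBall A B b a c xb M x) ⟨u, huw.1, rfl⟩)

/-- weak duality for the `p = 2` regularized Taylor subproblem:
`β(u, w) ≤ θ(x, u)` for every `x` and every dual-feasible `(u, w)`, hence
`inf_x sup_{‖u‖≤1} θ(x, u) ≥ sup_{(u,w) ∈ F} β(u, w)`. -/
theorem stmt12 {n m : ℕ} (hn : 1 ≤ n) (hm : 1 ≤ m)
    (A : Fin m → Matrix (Fin n) (Fin n) ℝ) (B : Matrix (Fin n) (Fin n) ℝ)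
    (hA : ∀ i, (A i).IsSymm) (hB : B.IsSymm)
    (b : Fin m → EuclideanSpace ℝ (Fin n)) (a : EuclideanSpace ℝ (Fin n))
    (c : Fin m → ℝ) (xb : EuclideanSpace ℝ (Fin n)) (M : ℝ) (hM : 0 < M) :
    (∀ (x : EuclideanSpace ℝ (Fin n)) (u : EuclideanSpace ℝ (Fin m)) (w : ℝ),
      (u, w) ∈ Feas A B → βfun A B b a c xb M u w ≤ θfun A B b a c xb M x u) ∧
    sSup {t : ℝ | ∃ u w, (u, w) ∈ Feas A B ∧ t = βfun A B b a c xb M u w} ≤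
      sInf {v : ℝ | ∃ x : EuclideanSpace ℝ (Fin n),
        v = sSup {t : ℝ | ∃ u : EuclideanSpace ℝ (Fin m),
          ‖u‖ ≤ 1 ∧ t = θfun A B b a c xb M x u}} :=
  stmt12_general A B hB b a c xb M hM
end
end

section
/- For every (u, w) ∈ F, the point x⁺ := x̄ − H(u, w)^{-1} G(u) satisfies, with r := ‖x⁺ − x̄‖: θ(x⁺, u) − β(u, w) = (M/12)(w/M + 2r)(r − w/M)², and in particular 0 ≤ θ(x⁺, u) − β(u, w). -/
open scoped BigOperators RealInnerProductSpace

noncomputable section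

variable {n m : ℕ}

/-- for any dual-feasible `(u, w)`, the point
`x⁺ = x̄ − H(u,w)⁻¹ G(u)` satisfies, with `r = ‖x⁺ − x̄‖`,
`θ(x⁺, u) − β(u, w) = (M/12)(w/M + 2r)(r − w/M)² ≥ 0`. -/
theorem stmt13 {n m : ℕ} (hn : 1 ≤ n) (hm : 1 ≤ m)
    (A : Fin m → Matrix (Fin n) (Fin n) ℝ) (B : Matrix (Fin n) (Fin n) ℝ)
    (hA : ∀ i, (A i).IsSymm) (hB : B.IsSymm)
    (b : Fin m → EuclideanSpace ℝ (Fin n)) (a : EuclideanSpace ℝ (Fin n))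
    (c : Fin m → ℝ) (xb : EuclideanSpace ℝ (Fin n)) (M : ℝ) (hM : 0 < M)
    (u : EuclideanSpace ℝ (Fin m)) (w : ℝ) (hfeas : (u, w) ∈ Feas A B)
    (xp : EuclideanSpace ℝ (Fin n))
    (hxp : xp = xb - Matrix.toEuclideanCLM (𝕜 := ℝ) (Hmat A B u w)⁻¹ (Gvec B b a xb u))

    (r : ℝ) (hr : r = ‖xp - xb‖) :
    θfun A B b a c xb M xp u - βfun A B b a c xb M u w =
      M / 12 * (w / M + 2 * r) * (r - w / M) ^ 2 ∧
    0 ≤ θfun A B b a c xb M xp u - βfun A B b a c xb M u w := by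
  obtain ⟨hu, hw, hH⟩ := hfeas
  set Hm := Hmat A B u w with hHm
  set G := Gvec B b a xb u with hGdef
  set d := xp - xb with hdd
  have hdet : IsUnit Hm.det := isUnit_iff_ne_zero.mpr hH.det_pos.ne'
  have hmul : Hm * Hm⁻¹ = 1 := Matrix.mul_nonsing_inv _ hdet
  have hTinv : Matrix.toEuclideanCLM (𝕜 := ℝ) Hm
      (Matrix.toEuclideanCLM (𝕜 := ℝ) Hm⁻¹ G) = G := by
    have h := congrArg (fun N => Matrix.toEuclideanCLM (𝕜 := ℝ) N G) hmul
    simpa [map_mul, ContinuousLinearMap.mul_apply] using h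
  have hd : d = -(Matrix.toEuclideanCLM (𝕜 := ℝ) Hm⁻¹ G) := by
    rw [hdd, hxp]; abel
  have hTd : Matrix.toEuclideanCLM (𝕜 := ℝ) Hm d = -G := by
    rw [hd, map_neg, hTinv]
  set e := ⟪Matrix.toEuclideanCLM (𝕜 := ℝ) Hm d, d⟫ with he
  have h1 : ⟪G, d⟫ = -e := by
    have : G = -(Matrix.toEuclideanCLM (𝕜 := ℝ) Hm d) := by rw [hTd, neg_neg]
    rw [this, inner_neg_left, he]
  have h3 : ⟪Matrix.toEuclideanCLM (𝕜 := ℝ) Hm⁻¹ G, G⟫ = e := by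
    have hv : Matrix.toEuclideanCLM (𝕜 := ℝ) Hm⁻¹ G = -d := by rw [hd, neg_neg]
    have hG' : G = -(Matrix.toEuclideanCLM (𝕜 := ℝ) Hm d) := by rw [hTd, neg_neg]
    rw [hv, hG', inner_neg_neg, real_inner_comm, he]
  have h2 : ⟪Matrix.toEuclideanCLM (𝕜 := ℝ) (∑ i, u i • A i + B) d, d⟫
      = e - w / 2 * ‖d‖ ^ 2 := by
    have hsplit : Matrix.toEuclideanCLM (𝕜 := ℝ) Hm d
        = Matrix.toEuclideanCLM (𝕜 := ℝ) (∑ i, u i • A i + B) d + (w / 2) • d := by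
      rw [hHm, Hmat, map_add, map_smul, map_one]
      simp
    have := congrArg (fun x => ⟪x, d⟫) hsplit
    simp only [inner_add_left, real_inner_smul_left,
      real_inner_self_eq_norm_sq] at this
    rw [he, this]; ring
  have hrd : r = ‖d‖ := hr
  have hr0 : 0 ≤ r := hrd ▸ norm_nonneg _
  have key : θfun A B b a c xb M xp u - βfun A B b a c xb M u w
      = -(w / 4) * r ^ 2 + M / 6 * r ^ 3 + w ^ 3 / (12 * M ^ 2) := by
    rw [θfun, βfun, ← hGdef, ← hHm, ← hdd, h1, h2, h3, ← hrd]
    ring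
  have hM' : M ≠ 0 := hM.ne'
  constructor
  · rw [key]; field_simp; ring
  · rw [key]
    have h4 : 0 ≤ w / M + 2 * r := by positivity
    have h5 : -(w / 4) * r ^ 2 + M / 6 * r ^ 3 + w ^ 3 / (12 * M ^ 2)
        = M / 12 * (w / M + 2 * r) * (r - w / M) ^ 2 := by field_simp; ring
    rw [h5]
    exact mul_nonneg (mul_nonneg (by positivity) h4) (sq_nonneg _)

end
end

section
/- Suppose y ∈ ℝ^n is a local minimizer of z ↦ ‖F(z)‖ + (μ/(p+1)!)‖z − x̄‖^{p+1}, that F(y) ≠ 0, and that ‖DF(y)ᵀ λ‖ ≥ σ‖λ‖ for all λ ∈ ℝ^m. Then (μ/p!)‖y − x̄‖^{p} ≥ σ. -/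
/-!
Since `F y ≠ 0` and `p ≥ 1`, the objective is differentiable at `y` (also when `y = x̄`), so its
derivative vanishes there. With `u = F y / ‖F y‖` this reads
`DF(y)ᵀ u = -(μ/p!) ‖y - x̄‖^(p-1) (y - x̄)`, and taking norms gives
`σ = σ ‖u‖ ≤ ‖DF(y)ᵀ u‖ = (μ/p!) ‖y - x̄‖^p`.
-/

open ContinuousLinearMap

theorem HasFDerivAt.norm_of_ne_zero {E F : Type*} [NormedAddCommGroup E] [NormedSpace ℝ E]
    [NormedAddCommGroup F] [InnerProductSpace ℝ F] {f : E → F} {f' : E →L[ℝ] F} {x : E}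
    (hf : HasFDerivAt f f' x) (h0 : f x ≠ 0) :
    HasFDerivAt (‖f ·‖) ((innerSL ℝ (‖f x‖⁻¹ • f x)).comp f') x := by
  have hsq : ‖f x‖ ^ 2 ≠ 0 := by positivity
  convert hf.norm_sq.sqrt hsq using 1
  · simp only [Real.sqrt_sq (norm_nonneg _)]
  · ext v
    simp only [map_smul, smul_comp, smul_apply, comp_apply, coe_innerSL_apply, smul_eq_mul,
      Real.sqrt_sq (norm_nonneg _), one_div, mul_inv_rev, nsmul_eq_mul, Nat.cast_ofNat]
    field_simp

theorem hasFDerivAt_norm_sub_pow_succ {E : Type*} [NormedAddCommGroup E] [InnerProductSpace ℝ E]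
    (a x : E) {p : ℕ} (hp : 1 ≤ p) :
    HasFDerivAt (‖· - a‖ ^ (p + 1))
      (innerSL ℝ (((p + 1) * ‖x - a‖ ^ (p - 1) : ℝ) • (x - a))) x := by
  have hfun : (‖· - a‖ ^ (p + 1)) = (fun z : E => ‖z‖ ^ ((p : ℝ) + 1)) ∘ (· - a) := by
    ext z
    simp [← Real.rpow_natCast]
  have hexp : ((p : ℝ) + 1 - 2) = ((p - 1 : ℕ) : ℝ) := by push_cast [hp]; ring
  rw [hfun]
  refine ((hasFDerivAt_norm_rpow (x - a) (by norm_cast; omega)).comp x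
    ((hasFDerivAt_id x).sub_const a)).congr_fderiv ?_
  ext v
  simp [hexp]

theorem IsLocalMin.adjoint_apply_normalized_eq_neg_gradient
    {E F : Type*} [NormedAddCommGroup E] [InnerProductSpace ℝ E] [CompleteSpace E]
    [NormedAddCommGroup F] [InnerProductSpace ℝ F] [CompleteSpace F]
    {f : E → F} {f' : E →L[ℝ] F} {g : E → ℝ} {w y : E}
    (hmin : IsLocalMin (fun z => ‖f z‖ + g z) y) (hf : HasFDerivAt f f' y)
    (hg : HasFDerivAt g (innerSL ℝ w) y) (hfy : f y ≠ 0) :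
    adjoint f' (‖f y‖⁻¹ • f y) = -w := by
  have hcrit := hmin.hasFDerivAt_eq_zero ((hf.norm_of_ne_zero hfy).add hg)
  refine ext_inner_right ℝ fun v => ?_
  have hv := congrArg (· v) hcrit
  simp only [add_apply, comp_apply, innerSL_apply_apply, zero_apply] at hv
  rw [adjoint_inner_left, inner_neg_left]
  linarith

theorem stmt15_general {n m : ℕ}
    (F : EuclideanSpace ℝ (Fin n) → EuclideanSpace ℝ (Fin m))
    (hF : ContDiff ℝ 1 F)
    (xb y : EuclideanSpace ℝ (Fin n)) (μ σ : ℝ) (hμ : 0 < μ)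
    (p : ℕ) (hp : 1 ≤ p)
    (hmin : IsLocalMin
      (fun z => ‖F z‖ + μ / (Nat.factorial (p + 1) : ℝ) * ‖z - xb‖ ^ (p + 1)) y)
    (hFy : F y ≠ 0)
    (hnd : ∀ lam : EuclideanSpace ℝ (Fin m),
      σ * ‖lam‖ ≤ ‖ContinuousLinearMap.adjoint (fderiv ℝ F y) lam‖) :
    σ ≤ μ / (Nat.factorial p : ℝ) * ‖y - xb‖ ^ p := by
  have hg :=
    (hasFDerivAt_norm_sub_pow_succ xb y hp).const_mul (μ / (Nat.factorial (p + 1) : ℝ))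
  rw [← map_smul] at hg
  have hadj := hmin.adjoint_apply_normalized_eq_neg_gradient
    (hF.differentiable one_ne_zero y).hasFDerivAt hg hFy
  calc
    σ = σ * ‖‖F y‖⁻¹ • F y‖ := by
      rw [norm_smul, norm_inv, norm_norm, inv_mul_cancel₀ (norm_ne_zero_iff.mpr hFy), mul_one]
    _ ≤ ‖adjoint (fderiv ℝ F y) (‖F y‖⁻¹ • F y)‖ := hnd _
    _ = μ / (Nat.factorial (p + 1) : ℝ) * (p + 1) * (‖y - xb‖ ^ (p - 1) * ‖y - xb‖) := by
      rw [hadj, norm_neg, norm_smul, norm_smul, Real.norm_of_nonneg (by positivity),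
        Real.norm_of_nonneg (by positivity)]
      ring
    _ = μ / (Nat.factorial p : ℝ) * ‖y - xb‖ ^ p := by
      rw [pow_sub_one_mul (by omega), Nat.factorial_succ]
      push_cast
      field_simp

/-- if `y` is a local minimizer of `z ↦ ‖F(z)‖ + (μ/(p+1)!)‖z − x̄‖^{p+1}`
with `F(y) ≠ 0`, and the Jacobian of `F` at `y` is `σ`-nondegenerate
(`‖DF(y)ᵀλ‖ ≥ σ‖λ‖` for all `λ`), then `(μ/p!)‖y − x̄‖^p ≥ σ`. -/
theorem stmt15 {n m : ℕ} (hn : 1 ≤ n) (hm : 1 ≤ m)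
    (F : EuclideanSpace ℝ (Fin n) → EuclideanSpace ℝ (Fin m))
    (hF : ContDiff ℝ 1 F)
    (xb y : EuclideanSpace ℝ (Fin n)) (μ σ : ℝ) (hμ : 0 < μ) (hσ : 0 < σ)
    (p : ℕ) (hp : 1 ≤ p)
    (hmin : IsLocalMin
      (fun z => ‖F z‖ + μ / (Nat.factorial (p + 1) : ℝ) * ‖z - xb‖ ^ (p + 1)) y)
    (hFy : F y ≠ 0)
    (hnd : ∀ lam : EuclideanSpace ℝ (Fin m),
      σ * ‖lam‖ ≤ ‖ContinuousLinearMap.adjoint (fderiv ℝ F y) lam‖) :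
    σ ≤ μ / (Nat.factorial p : ℝ) * ‖y - xb‖ ^ p :=
  stmt15_general F hF xb y μ σ hμ p hp hmin hFy hnd
end
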